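/- Every polyhedron P = { x ∈ ℝⁿ : Ax ≥ b } can be written as the Minkowski sum of the convex hull of a finite set of points and the conical hull of a finite set of vectors (Minkowski–Weyl theorem). -/

import Mathlib

/-!
Homogenize: `P` is the slice at height `1` of the cone `K = {(x, t) | 0 ≤ t, b t ≤ A x}`, which is
an intersection of finitely many half-spaces. Such a cone is finitely generated: the whole space
is generated by `±` a spanning set, and Fourier–Motzkin elimination cuts a finitely generated cone
by the half-space `0 ≤ φ` by keeping the generators `p` with `0 ≤ φ p` and adding
`φ p • q - φ q • p` for every pair with `0 ≤ φ p`, `φ q < 0`. Rescaling the generators of `K` with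
`t > 0` to height `1` gives `V`; those with `t = 0` give `R`.
-/

open Pointwise

lemma Finset.sum_product_mul_smul_sub_smul {R M : Type*} [CommRing R] [AddCommGroup M]
    [Module R M] (s t : Finset M) (μ : M → R) (φ : M →ₗ[R] R) :
    ∑ pq ∈ s ×ˢ t, (μ pq.1 * μ pq.2) • (φ pq.1 • pq.2 - φ pq.2 • pq.1) =
      (∑ p ∈ s, μ p * φ p) • ∑ q ∈ t, μ q • q - (∑ q ∈ t, μ q * φ q) • ∑ p ∈ s, μ p • p := by
  simp only [Finset.sum_product, smul_sub, Finset.sum_sub_distrib, Finset.smul_sum, smul_smul,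
    Finset.sum_mul, Finset.sum_smul]
  rw [Finset.sum_comm (s := t)]
  congr 1 <;> refine Finset.sum_congr rfl fun _ _ => Finset.sum_congr rfl fun _ _ => ?_ <;>
    ring_nf

namespace PointedCone

lemma mem_hull_finset_iff {R E : Type*} [Semiring R] [PartialOrder R] [IsOrderedRing R]
    [AddCommMonoid E] [Module R E] {s : Finset E} {x : E} :
    x ∈ hull R (s : Set E) ↔ ∃ μ : E → R, (∀ r, 0 ≤ μ r) ∧ ∑ r ∈ s, μ r • r = x := by
  refine ⟨fun hx => ?_, ?_⟩
  · obtain ⟨f, -, rfl⟩ := Submodule.mem_span_finset.mp hx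
    exact ⟨fun r => f r, fun r => (f r).2, rfl⟩
  · rintro ⟨μ, hμ, rfl⟩
    exact Submodule.sum_mem _ fun r hr => smul_mem _ (hμ r) (subset_hull hr)

variable {𝕜 E : Type*} [Field 𝕜] [LinearOrder 𝕜] [IsStrictOrderedRing 𝕜]
  [AddCommGroup E] [Module 𝕜 E]

section FourierMotzkin

variable [DecidableEq E] (s : Finset E) (φ : E →ₗ[𝕜] 𝕜)

def fourierMotzkin : Finset E :=
  s.filter (0 ≤ φ ·) ∪
    (s.filter (0 ≤ φ ·) ×ˢ s.filter (¬ 0 ≤ φ ·)).image fun pq => φ pq.1 • pq.2 - φ pq.2 • pq.1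

lemma hull_fourierMotzkin_le :
    hull 𝕜 (fourierMotzkin s φ : Set E) ≤ hull 𝕜 (s : Set E) ⊓ (positive 𝕜 𝕜).comap φ := by
  refine Submodule.span_le.mpr fun r hr => ?_
  simp only [fourierMotzkin, Finset.coe_union, Finset.coe_image, Finset.coe_product,
    Set.mem_union, Set.mem_image, Set.mem_prod, Finset.mem_coe, Finset.mem_filter] at hr
  rcases hr with ⟨hrs, hφr⟩ | ⟨⟨p, q⟩, ⟨⟨hps, hφp⟩, hqs, hφq⟩, rfl⟩
  · exact ⟨subset_hull hrs, hφr⟩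
  · refine ⟨?_, by simp [mul_comm]⟩
    rw [sub_eq_add_neg, ← neg_smul]
    exact add_mem (smul_mem _ hφp (subset_hull hqs))
      (smul_mem _ (neg_nonneg.mpr (not_le.mp hφq).le) (subset_hull hps))

lemma inf_comap_positive_le_hull_fourierMotzkin :
    hull 𝕜 (s : Set E) ⊓ (positive 𝕜 𝕜).comap φ ≤ hull 𝕜 (fourierMotzkin s φ : Set E) := by
  rintro _ ⟨hxC, hφx⟩
  obtain ⟨μ, hμ, rfl⟩ := mem_hull_finset_iff.mp hxC
  set sp := s.filter (0 ≤ φ ·)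
  set sn := s.filter (¬ 0 ≤ φ ·)
  set a := ∑ p ∈ sp, μ p * φ p
  set c := ∑ q ∈ sn, μ q * φ q
  have hsplit : ∑ p ∈ sp, μ p • p + ∑ q ∈ sn, μ q • q = ∑ r ∈ s, μ r • r :=
    Finset.sum_filter_add_sum_filter_not _ _ _
  have hφsn : ∀ q ∈ sn, μ q * φ q ≤ 0 := fun q hq =>
    mul_nonpos_of_nonneg_of_nonpos (hμ q) (not_le.mp (Finset.mem_filter.mp hq).2).le
  have ha : 0 ≤ a := Finset.sum_nonneg fun p hp => mul_nonneg (hμ p) (Finset.mem_filter.mp hp).2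
  have hac : 0 ≤ a + c := by
    have hφx : 0 ≤ φ (∑ r ∈ s, μ r • r) := hφx
    simpa only [← hsplit, map_add, map_sum, map_smul, smul_eq_mul] using hφx
  have hsp : ∑ p ∈ sp, μ p • p ∈ hull 𝕜 (fourierMotzkin s φ : Set E) :=
    Submodule.sum_mem _ fun p hp => smul_mem _ (hμ p) (subset_hull (Finset.mem_union_left _ hp))
  rw [← hsplit]
  rcases ha.eq_or_lt with ha0 | hapos
  · have hsn : ∑ q ∈ sn, μ q • q = 0 := by
      refine Finset.sum_eq_zero fun q hq => ?_
      have hμφ := (Finset.sum_eq_zero_iff_of_nonpos hφsn).mp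
        (le_antisymm (Finset.sum_nonpos hφsn) (by linarith)) q hq
      rw [(mul_eq_zero_iff_right (not_le.mp (Finset.mem_filter.mp hq).2).ne).mp hμφ, zero_smul]
    rwa [hsn, add_zero]
  · have hW : ∑ pq ∈ sp ×ˢ sn, (μ pq.1 * μ pq.2) • (φ pq.1 • pq.2 - φ pq.2 • pq.1) ∈
        hull 𝕜 (fourierMotzkin s φ : Set E) :=
      Submodule.sum_mem _ fun pq hpq => smul_mem _ (mul_nonneg (hμ _) (hμ _))
        (subset_hull (Finset.mem_union_right _ (Finset.mem_image_of_mem _ hpq)))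
    rw [Finset.sum_product_mul_smul_sub_smul] at hW
    have hx : ∑ p ∈ sp, μ p • p + ∑ q ∈ sn, μ q • q = a⁻¹ • ((a + c) • ∑ p ∈ sp, μ p • p +
        (a • ∑ q ∈ sn, μ q • q - c • ∑ p ∈ sp, μ p • p)) := by
      match_scalars
      · field_simp
        ring
      · field_simp
    rw [hx]
    exact smul_mem _ (inv_nonneg.mpr ha) (add_mem (smul_mem _ hac hsp) hW)

end FourierMotzkin

lemma FG.inf_comap_positive {C : PointedCone 𝕜 E} (hC : C.FG) (φ : E →ₗ[𝕜] 𝕜) :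
    (C ⊓ (positive 𝕜 𝕜).comap φ).FG := by
  classical
  obtain ⟨s, rfl⟩ := hC
  exact ⟨fourierMotzkin s φ, le_antisymm (hull_fourierMotzkin_le s φ)
    (inf_comap_positive_le_hull_fourierMotzkin s φ)⟩

lemma fg_top [Module.Finite 𝕜 E] : (⊤ : PointedCone 𝕜 E).FG := by
  classical
  obtain ⟨S, hS⟩ := Module.Finite.fg_top (R := 𝕜) (M := E)
  refine ⟨S ∪ S.image Neg.neg, eq_top_iff.mpr fun x _ => ?_⟩
  obtain ⟨f, -, rfl⟩ := Submodule.mem_span_finset.mp (hS ▸ Submodule.mem_top (x := x))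
  refine Submodule.sum_mem _ fun r hr => ?_
  rcases le_total 0 (f r) with h | h
  · exact smul_mem _ h (subset_hull (by simp [hr]))
  · rw [← neg_smul_neg]
    exact smul_mem _ (neg_nonneg.mpr h) (subset_hull (by simp [hr]))

theorem DualFG.fg [Module.Finite 𝕜 E] {M : Type*} [AddCommGroup M] [Module 𝕜 M]
    {p : M →ₗ[𝕜] E →ₗ[𝕜] 𝕜} {C : PointedCone 𝕜 E} (hC : C.DualFG p) : C.FG := by
  classical
  obtain ⟨s, rfl⟩ := hC
  induction s using Finset.induction_on with
  | empty => simpa using fg_top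
  | insert x s _ ih =>
    rw [Finset.coe_insert, dual_insert, dual_singleton, inf_comm]
    exact FG.inf_comap_positive ih (p x)

lemma convex_setOf_mk_one_mem (C : PointedCone 𝕜 (E × 𝕜)) :
    Convex 𝕜 {x | (x, (1 : 𝕜)) ∈ C} := by
  intro x hx y hy a b ha hb hab
  have : (a • x + b • y, (1 : 𝕜)) = a • (x, 1) + b • (y, 1) := by ext <;> simp [hab]
  change _ ∈ C
  rw [this]
  exact C.convex hx hy ha hb hab

section Slice

variable [DecidableEq E] (G : Finset (E × 𝕜))

def slicePoints : Finset E := (G.filter (0 < ·.2)).image fun z => z.2⁻¹ • z.1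

def sliceDirections : Finset E := (G.filter (·.2 = 0)).image Prod.fst

lemma setOf_mk_one_mem_hull_subset (hG : ∀ z ∈ G, 0 ≤ z.2) :
    {x | (x, (1 : 𝕜)) ∈ hull 𝕜 (G : Set (E × 𝕜))} ⊆
      convexHull 𝕜 (slicePoints G : Set E) + (hull 𝕜 (sliceDirections G : Set E) : Set E) := by
  intro x hx
  obtain ⟨μ, hμ, hsum⟩ := mem_hull_finset_iff.mp hx
  set Gp := G.filter (0 < ·.2)
  set G0 := G.filter (¬ 0 < ·.2)
  have hG0 : ∀ z ∈ G0, z ∈ G.filter (·.2 = 0) := fun z hz => by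
    obtain ⟨hzG, hz⟩ := Finset.mem_filter.mp hz
    exact Finset.mem_filter.mpr ⟨hzG, le_antisymm (not_lt.mp hz) (hG z hzG)⟩
  have hsplit : ∑ z ∈ Gp, μ z • z + ∑ z ∈ G0, μ z • z = (x, 1) :=
    (Finset.sum_filter_add_sum_filter_not _ _ _).trans hsum
  have h1 := congrArg Prod.snd hsplit
  have hx := congrArg Prod.fst hsplit
  simp only [Prod.snd_add, Prod.fst_add, Prod.snd_sum, Prod.fst_sum, Prod.smul_snd,
    Prod.smul_fst, smul_eq_mul] at h1 hx
  rw [Finset.sum_eq_zero (s := G0) fun z hz => by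
    rw [(Finset.mem_filter.mp (hG0 z hz)).2, mul_zero], add_zero] at h1
  rw [← hx]
  refine Set.add_mem_add ?_ ?_
  · have : ∑ z ∈ Gp, μ z • z.1 = ∑ z ∈ Gp, (μ z * z.2) • (z.2⁻¹ • z.1) := by
      refine Finset.sum_congr rfl fun z hz => ?_
      rw [smul_smul, mul_assoc, mul_inv_cancel₀ (Finset.mem_filter.mp hz).2.ne', mul_one]
    rw [this]
    exact (convex_convexHull 𝕜 _).sum_mem
      (fun z hz => mul_nonneg (hμ z) (Finset.mem_filter.mp hz).2.le) h1
      (fun z hz => subset_convexHull 𝕜 _ (Finset.mem_image_of_mem _ hz))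
  · exact Submodule.sum_mem _ fun z hz =>
      smul_mem _ (hμ z) (subset_hull (Finset.mem_image_of_mem _ (hG0 z hz)))

lemma convexHull_add_hull_subset_setOf_mk_one_mem :
    convexHull 𝕜 (slicePoints G : Set E) + (hull 𝕜 (sliceDirections G : Set E) : Set E) ⊆
      {x | (x, (1 : 𝕜)) ∈ hull 𝕜 (G : Set (E × 𝕜))} := by
  have hV : (slicePoints G : Set E) ⊆ {x | (x, (1 : 𝕜)) ∈ hull 𝕜 (G : Set (E × 𝕜))} := by
    intro _ hv
    obtain ⟨z, hz, rfl⟩ := Finset.mem_image.mp hv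
    obtain ⟨hzG, hz2⟩ := Finset.mem_filter.mp hz
    have : (z.2⁻¹ • z.1, (1 : 𝕜)) = z.2⁻¹ • z := Prod.ext rfl (inv_mul_cancel₀ hz2.ne').symm
    rw [Set.mem_ofPred_eq, this]
    exact smul_mem _ (inv_nonneg.mpr hz2.le) (subset_hull hzG)
  have hR : hull 𝕜 (sliceDirections G : Set E) ≤
      (hull 𝕜 (G : Set (E × 𝕜))).comap (LinearMap.inl 𝕜 E 𝕜) := by
    refine Submodule.span_le.mpr fun _ hr => ?_
    obtain ⟨z, hz, rfl⟩ := Finset.mem_image.mp hr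
    obtain ⟨hzG, hz0⟩ := Finset.mem_filter.mp hz
    rw [SetLike.mem_coe, mem_comap, LinearMap.inl_apply,
      show (z.1, (0 : 𝕜)) = z from Prod.ext rfl hz0.symm]
    exact subset_hull hzG
  rintro _ ⟨v, hv, r, hr, rfl⟩
  rw [Set.mem_ofPred_eq, show (v + r, (1 : 𝕜)) = (v, 1) + (r, 0) by simp]
  exact add_mem (convexHull_min hV (convex_setOf_mk_one_mem _) hv) (hR hr)

end Slice

theorem FG.exists_setOf_mk_one_mem_eq {C : PointedCone 𝕜 (E × 𝕜)} (hC : C.FG)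
    (hC₀ : ∀ z ∈ C, 0 ≤ z.2) :
    ∃ V R : Finset E,
      {x | (x, (1 : 𝕜)) ∈ C} = convexHull 𝕜 (V : Set E) + (hull 𝕜 (R : Set E) : Set E) := by
  classical
  obtain ⟨G, rfl⟩ := hC
  exact ⟨slicePoints G, sliceDirections G,
    (setOf_mk_one_mem_hull_subset G fun z hz => hC₀ z (subset_hull hz)).antisymm
      (convexHull_add_hull_subset_setOf_mk_one_mem G)⟩

end PointedCone

open PointedCone in
theorem exists_setOf_le_eq_convexHull_add_hull {𝕜 E ι : Type*} [Field 𝕜] [LinearOrder 𝕜]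
    [IsStrictOrderedRing 𝕜] [AddCommGroup E] [Module 𝕜 E] [Module.Finite 𝕜 E] [Fintype ι]
    (f : ι → E →ₗ[𝕜] 𝕜) (b : ι → 𝕜) :
    ∃ V R : Finset E,
      {x | ∀ i, b i ≤ f i x} = convexHull 𝕜 (V : Set E) + (hull 𝕜 (R : Set E) : Set E) := by
  classical
  let g : ι → (E × 𝕜) →ₗ[𝕜] 𝕜 := fun i => f i ∘ₗ LinearMap.fst 𝕜 E 𝕜 - b i • LinearMap.snd 𝕜 E 𝕜
  let K : PointedCone 𝕜 (E × 𝕜) :=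
    dual .id (insert (LinearMap.snd 𝕜 E 𝕜) (Finset.univ.image g) : Finset _)
  have hK : K.FG := DualFG.fg ⟨_, rfl⟩
  have hK₀ : ∀ z ∈ K, 0 ≤ z.2 := fun z hz => hz (x := LinearMap.snd 𝕜 E 𝕜) (by simp)
  obtain ⟨V, R, hVR⟩ := FG.exists_setOf_mk_one_mem_eq hK hK₀
  refine ⟨V, R, Eq.trans ?_ hVR⟩
  ext x
  simp [K, g]

/-- Minkowski–Weyl theorem: every polyhedron `{x : Ax ≥ b}` is the Minkowski
sum of the convex hull of a finite set of points and the conical hull of a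
finite set of vectors. -/
theorem stmt_2 (m n : ℕ) (A : Matrix (Fin m) (Fin n) ℝ) (b : Fin m → ℝ) :
    ∃ (V R : Finset (Fin n → ℝ)),
      {x : Fin n → ℝ | ∀ i, b i ≤ A.mulVec x i} =
        (convexHull ℝ (V : Set (Fin n → ℝ))) +
        {x : Fin n → ℝ | ∃ μ : (Fin n → ℝ) → ℝ,
          (∀ r, 0 ≤ μ r) ∧ x = ∑ r ∈ R, μ r • r} := by
  obtain ⟨V, R, hVR⟩ :=
    exists_setOf_le_eq_convexHull_add_hull (fun i => LinearMap.proj i ∘ₗ A.mulVecLin) b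
  refine ⟨V, R, ?_⟩
  have hR : {x : Fin n → ℝ | ∃ μ : (Fin n → ℝ) → ℝ, (∀ r, 0 ≤ μ r) ∧ x = ∑ r ∈ R, μ r • r} =
      (PointedCone.hull ℝ (R : Set (Fin n → ℝ)) : Set (Fin n → ℝ)) := by
    ext x
    simp [PointedCone.mem_hull_finset_iff, eq_comm]
  simpa [hR] using hVR
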